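/- Let t be a finite tree on n vertices and fix a starting vertex u_1. Consider the random sequential process that, having selected connected vertex set {u_1,...,u_{k-1}}, selects the next vertex u_k from the neighbors of this set with probability n_{u_k}^{(u_1)} / (n - k + 1), where n_v^{(u_1)} is the size of the subtree rooted at v away from u_1. Then every history (u_1, u_2, ..., u_n) rooted at u_1 is generated with equal probability 1/#hist(t, u_1), i.e., the process samples uniformly from the histories rooted at u_1. -/

import Mathlib

open scoped Classical
open SimpleGraph Finset

variable {V : Type*}

/-- A history of a graph `G`: an ordering of all vertices (no repeats) such that
every nonempty prefix induces a connected subgraph. -/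
def IsHistory (G : SimpleGraph V) (l : List V) : Prop :=
  l.Nodup ∧ (∀ v : V, v ∈ l) ∧ ∀ k : ℕ, 1 ≤ k → (G.induce {v | v ∈ l.take k}).Connected

/-- Number of histories of `G` rooted at (i.e. starting with) `u`. -/
noncomputable def nHist (G : SimpleGraph V) (u : V) : ℕ :=
  Nat.card {l : List V // IsHistory G l ∧ l.head? = some u}

/-- Total number of histories of `G`. -/
noncomputable def nHistAll (G : SimpleGraph V) : ℕ :=
  Nat.card {l : List V // IsHistory G l}

/-- Size of the subtree of `G` rooted at `v` away from `u`: the number of vertices `w`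
such that every walk from `w` to `u` passes through `v`. -/
noncomputable def subtreeSize (G : SimpleGraph V) (u v : V) : ℕ :=
  Nat.card {w : V | ∀ p : G.Walk w u, v ∈ p.support}

/-!
For a connected set `S ∋ u`, count the ways `h(S)` to order the remaining vertices so that every
prefix keeps `S` connected. Splitting off the first added vertex gives
`h(S) = ∑_{v ∈ ∂S} h(S ∪ {v})`, and in a tree the subtrees (away from `u`) of the vertices of the
outer boundary `∂S` partition the complement of `S`, so `∑_{v ∈ ∂S} n_v = |Sᶜ|`. Induction on
`|Sᶜ|` then gives `h(S) ∏_{v ∉ S} n_v = |Sᶜ|!`; for `S = {u}` this is the hook length formula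
`#hist(t, u) ∏_{v ≠ u} n_v = (n - 1)!`, and the probability of a history is
`∏_{v ≠ u} n_v / (n - 1)!`.
-/

open scoped Nat

namespace SimpleGraph

variable {G : SimpleGraph V} {u v w : V}

lemma exists_walk_support_subset_of_connected_induce {S : Set V} (hS : (G.induce S).Connected)
    {a b : V} (ha : a ∈ S) (hb : b ∈ S) : ∃ p : G.Walk a b, ∀ x ∈ p.support, x ∈ S := by
  obtain ⟨q⟩ := hS.preconnected ⟨a, ha⟩ ⟨b, hb⟩
  refine ⟨q.map (Embedding.induce S).toHom, fun x hx => ?_⟩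
  obtain ⟨y, -, rfl⟩ := List.mem_map.1 (q.support_map _ ▸ hx)
  exact y.2

lemma connected_induce_insert {S : Set V} (hS : (G.induce S).Connected) {s : V} (hs : s ∈ S)
    (h : G.Adj v s) : (G.induce (insert v S)).Connected :=
  connected_induce_union (s := {v}) (by simp [induce_singleton_eq_top]) hS.preconnected rfl hs h

lemma exists_adj_of_connected_induce_insert {S : Set V} (hv : v ∉ S) (hS : S.Nonempty)
    (h : (G.induce (insert v S)).Connected) : ∃ s ∈ S, G.Adj v s := by
  obtain ⟨s, hs⟩ := hS
  obtain ⟨p, hp⟩ := exists_walk_support_subset_of_connected_induce h (Set.mem_insert v S)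
    (Set.mem_insert_of_mem v hs)
  obtain ⟨d, hd, rfl, hd'⟩ := p.exists_boundary_dart {v} rfl (by rintro rfl; exact hv hs)
  exact ⟨d.snd, (hp _ (p.dart_snd_mem_support_of_mem_darts hd)).resolve_left hd', d.adj⟩

def subtree (G : SimpleGraph V) (u v : V) : Set V := {w | ∀ p : G.Walk w u, v ∈ p.support}

lemma IsTree.mem_subtree_iff (hG : G.IsTree) {P : G.Walk w u} (hP : P.IsPath) :
    w ∈ G.subtree u v ↔ v ∈ P.support := by
  refine ⟨fun h => h P, fun hv q => q.support_toPath_subset_support ?_⟩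
  rwa [(hG.existsUnique_path w u).unique q.toPath.2 hP]

lemma notMem_subtree_of_mem {S : Set V} (hS : (G.induce S).Connected) (hu : u ∈ S) (hv : v ∉ S)
    (hw : w ∈ S) : w ∉ G.subtree u v := fun h =>
  have ⟨p, hp⟩ := exists_walk_support_subset_of_connected_induce hS hw hu
  hv (hp v (h p))

/-- Otherwise `P` could be rerouted from `v` through `S` to `u`, avoiding `v'`. -/
lemma mem_support_takeUntil_of_mem_subtree {S : Set V} (hS : (G.induce S).Connected)
    (hu : u ∈ S) {v' s : V} (hv' : v' ∉ S) (hs : s ∈ S) (hvs : G.Adj v s)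
    (hw : w ∈ G.subtree u v') (P : G.Walk w u) (hvP : v ∈ P.support) :
    v' ∈ (P.takeUntil v hvP).support := by
  obtain ⟨W, hW⟩ := exists_walk_support_subset_of_connected_induce hS hs hu
  have := hw ((P.takeUntil v hvP).append (.cons hvs W))
  rw [Walk.mem_support_append_iff, Walk.support_cons, List.mem_cons] at this
  rcases this with h | rfl | h
  · exact h
  · exact Walk.end_mem_support _
  · exact absurd (hW _ h) hv'

lemma eq_of_mem_subtree_of_mem_subtree (hG : G.Preconnected) {S : Set V}
    (hS : (G.induce S).Connected) (hu : u ∈ S) {v v' s s' : V} (hv : v ∉ S) (hv' : v' ∉ S)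
    (hs : s ∈ S) (hs' : s' ∈ S) (hvs : G.Adj v s) (hvs' : G.Adj v' s')
    (hw : w ∈ G.subtree u v) (hw' : w ∈ G.subtree u v') : v = v' := by
  by_contra hne
  obtain ⟨P⟩ := hG w u
  have h := mem_support_takeUntil_of_mem_subtree hS hu hv' hs hvs hw' P (hw P)
  exact Walk.notMem_support_takeUntil_support_takeUntil_subset (Ne.symm hne) (hw P) h
    (mem_support_takeUntil_of_mem_subtree hS hu hv hs' hvs' hw P _)

lemma IsTree.exists_mem_subtree {S : Set V} (hG : G.IsTree) (hu : u ∈ S) (hw : w ∉ S) :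
    ∃ v ∉ S, (∃ s ∈ S, G.Adj v s) ∧ w ∈ G.subtree u v := by
  obtain ⟨P, hP⟩ := (hG.existsUnique_path w u).exists
  obtain ⟨d, hd, hs, hv⟩ := P.reverse.exists_boundary_dart S hu hw
  refine ⟨d.snd, hv, ⟨d.fst, hs, d.adj.symm⟩, (hG.mem_subtree_iff hP).2 ?_⟩
  simpa using P.reverse.dart_snd_mem_support_of_mem_darts hd

def IsHistoryFrom (G : SimpleGraph V) (S : Finset V) (l : List V) : Prop :=
  l.Nodup ∧ (∀ v, v ∈ l ↔ v ∉ S) ∧ ∀ k, (G.induce ↑(S ∪ (l.take k).toFinset)).Connected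

lemma isHistoryFrom_nil_iff {S : Finset V} :
    IsHistoryFrom G S [] ↔ (∀ v, v ∈ S) ∧ (G.induce ↑S).Connected := by
  have hprefix (k : ℕ) : S ∪ (([] : List V).take k).toFinset = S := by simp
  simp only [IsHistoryFrom, List.nodup_nil, List.not_mem_nil, false_iff, not_not, true_and]
  exact and_congr_right fun _ => ⟨fun h => hprefix 0 ▸ h 0, fun h k => by rwa [hprefix]⟩

lemma isHistoryFrom_cons_iff {S : Finset V} (hS : (G.induce ↑S).Connected) (hne : S.Nonempty)
    {l : List V} :
    IsHistoryFrom G S (v :: l) ↔ (v ∉ S ∧ ∃ s ∈ S, G.Adj v s) ∧ IsHistoryFrom G (insert v S) l := by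
  have hprefix (k : ℕ) :
      S ∪ ((v :: l).take (k + 1)).toFinset = insert v S ∪ (l.take k).toFinset := by
    simp [Finset.union_insert, Finset.insert_union]
  constructor
  · rintro ⟨hnd, hmem, hconn⟩
    have hvS : v ∉ S := (hmem v).1 List.mem_cons_self
    have hvS' : (G.induce (insert v ↑S)).Connected := by
      have h := hprefix 0 ▸ hconn 1
      rwa [List.take_zero, List.toFinset_nil, union_empty, coe_insert] at h
    refine ⟨⟨hvS, exists_adj_of_connected_induce_insert hvS hne hvS'⟩, (List.nodup_cons.1 hnd).2,
      fun x => ?_, fun k => hprefix k ▸ hconn (k + 1)⟩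
    have := hmem x
    have := (List.nodup_cons.1 hnd).1
    grind
  · rintro ⟨⟨hvS, -⟩, hnd, hmem, hconn⟩
    refine ⟨List.nodup_cons.2 ⟨fun h => (hmem v).1 h (mem_insert_self v S), hnd⟩,
      fun x => ?_, fun k => ?_⟩
    · have := hmem x
      grind
    · cases k with
      | zero => rwa [List.take_zero, List.toFinset_nil, union_empty]
      | succ k => exact hprefix k ▸ hconn k

lemma isHistory_cons_iff {l : List V} : IsHistory G (u :: l) ↔ IsHistoryFrom G {u} l := by
  have hprefix (k : ℕ) :
      {x | x ∈ (u :: l).take (k + 1)} = (↑({u} ∪ (l.take k).toFinset) : Set V) := by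
    ext; simp
  refine ⟨fun ⟨hnd, hmem, hconn⟩ => ⟨(List.nodup_cons.1 hnd).2, fun x => ?_,
    fun k => hprefix k ▸ hconn (k + 1) k.succ_pos⟩, fun ⟨hnd, hmem, hconn⟩ => ⟨?_, fun x => ?_, ?_⟩⟩
  · have := hmem x
    have := (List.nodup_cons.1 hnd).1
    grind
  · exact List.nodup_cons.2 ⟨fun h => (hmem u).1 h (mem_singleton_self u), hnd⟩
  · have := hmem x
    grind
  · rintro (_ | k) hk
    · omega
    · exact hprefix k ▸ hconn k

section Fintype

variable [Fintype V]

noncomputable def outerBoundary (G : SimpleGraph V) (S : Finset V) : Finset V :=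
  {v ∈ Sᶜ | ∃ s ∈ S, G.Adj v s}

lemma mem_outerBoundary {S : Finset V} : v ∈ G.outerBoundary S ↔ v ∉ S ∧ ∃ s ∈ S, G.Adj v s := by
  simp [outerBoundary]

lemma subtreeSize_eq_card (G : SimpleGraph V) (u v : V) :
    subtreeSize G u v = #(G.subtree u v).toFinset := by
  rw [subtreeSize, Nat.card_coe_set_eq, Set.ncard_eq_toFinset_card']
  rfl

lemma IsTree.sum_subtreeSize_outerBoundary (hG : G.IsTree) {S : Finset V}
    (hS : (G.induce ↑S).Connected) (hu : u ∈ S) :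
    ∑ v ∈ G.outerBoundary S, subtreeSize G u v = #Sᶜ := by
  have hcover : Sᶜ = (G.outerBoundary S).biUnion fun v => (G.subtree u v).toFinset := by
    ext w
    simp only [mem_compl, mem_biUnion, mem_outerBoundary, Set.mem_toFinset]
    refine ⟨fun hw => ?_, fun ⟨v, ⟨hv, _⟩, hwv⟩ hw => notMem_subtree_of_mem hS hu hv hw hwv⟩
    obtain ⟨v, hv, hvS, hwv⟩ := hG.exists_mem_subtree (S := ↑S) hu hw
    exact ⟨v, ⟨hv, hvS⟩, hwv⟩
  rw [hcover, card_biUnion]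
  · exact sum_congr rfl fun v _ => subtreeSize_eq_card G u v
  · intro v hv v' hv' hne
    rw [mem_coe, mem_outerBoundary] at hv hv'
    obtain ⟨hv, s, hs, hvs⟩ := hv
    obtain ⟨hv', s', hs', hvs'⟩ := hv'
    rw [Function.onFun, Finset.disjoint_left]
    exact fun w hw hw' => hne <| eq_of_mem_subtree_of_mem_subtree hG.connected.preconnected hS hu
      hv hv' hs hs' hvs hvs' (Set.mem_toFinset.1 hw) (Set.mem_toFinset.1 hw')

lemma finite_setOf_isHistoryFrom (G : SimpleGraph V) (S : Finset V) :
    {l | IsHistoryFrom G S l}.Finite :=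
  (List.finite_length_le V (Fintype.card V)).subset fun _ hl => hl.1.length_le_card

noncomputable def histFrom (G : SimpleGraph V) (S : Finset V) : Finset (List V) :=
  (finite_setOf_isHistoryFrom G S).toFinset

lemma mem_histFrom {S : Finset V} {l : List V} : l ∈ G.histFrom S ↔ IsHistoryFrom G S l :=
  Set.Finite.mem_toFinset _

lemma histFrom_univ (hG : G.Connected) : G.histFrom univ = {[]} := by
  ext (_ | ⟨v, l⟩)
  · rw [mem_histFrom, isHistoryFrom_nil_iff, coe_univ]
    simpa using (induceUnivIso G).connected_iff.2 hG
  · simp only [mem_histFrom, mem_singleton, reduceCtorEq, iff_false]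
    exact fun h => (h.2.1 v).1 List.mem_cons_self (mem_univ v)

lemma histFrom_eq_biUnion {S : Finset V} (hS : (G.induce ↑S).Connected) (hne : S.Nonempty)
    (hSu : S ≠ univ) :
    G.histFrom S = (G.outerBoundary S).biUnion
      fun v => (G.histFrom (insert v S)).map ⟨List.cons v, List.cons_injective⟩ := by
  ext (_ | ⟨v, l⟩)
  · simpa [mem_histFrom, isHistoryFrom_nil_iff] using fun h => absurd (eq_univ_of_forall h) hSu
  · simp [mem_histFrom, isHistoryFrom_cons_iff hS hne, mem_outerBoundary]

lemma card_histFrom {S : Finset V} (hS : (G.induce ↑S).Connected) (hne : S.Nonempty)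
    (hSu : S ≠ univ) :
    #(G.histFrom S) = ∑ v ∈ G.outerBoundary S, #(G.histFrom (insert v S)) := by
  rw [histFrom_eq_biUnion hS hne hSu, card_biUnion]
  · simp
  · intro v _ v' _ hne
    simp [Function.onFun, Finset.disjoint_left, hne.symm]

theorem IsTree.card_histFrom_mul_prod_subtreeSize (hG : G.IsTree) {S : Finset V} (hu : u ∈ S)
    (hS : (G.induce ↑S).Connected) :
    #(G.histFrom S) * ∏ v ∈ Sᶜ, subtreeSize G u v = (#Sᶜ)! := by
  induction hk : #Sᶜ generalizing S with
  | zero =>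
    obtain rfl : S = univ := compl_eq_empty_iff S |>.1 (card_eq_zero.1 hk)
    simp [histFrom_univ hG.connected]
  | succ k ih =>
    have hSu : S ≠ univ := fun h => by simp [h] at hk
    have hstep : ∀ v ∈ G.outerBoundary S,
        #(G.histFrom (insert v S)) * ∏ w ∈ Sᶜ, subtreeSize G u w = subtreeSize G u v * k ! := by
      intro v hv
      obtain ⟨hvS, s, hs, hvs⟩ := mem_outerBoundary.1 hv
      have hconn : (G.induce ↑(insert v S)).Connected := by
        rw [coe_insert]
        exact connected_induce_insert hS hs hvs
      have hcard : #(insert v S)ᶜ = k := by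
        rw [compl_insert, card_erase_of_mem (mem_compl.2 hvS), hk, Nat.add_sub_cancel]
      rw [← mul_prod_erase _ _ (mem_compl.2 hvS), mul_left_comm, ← compl_insert,
        ih (mem_insert_of_mem hu) hconn hcard]
    rw [card_histFrom hS ⟨u, hu⟩ hSu, sum_mul, sum_congr rfl hstep, ← sum_mul,
      hG.sum_subtreeSize_outerBoundary hS hu, hk, Nat.factorial_succ]

lemma nHist_eq_card_histFrom (G : SimpleGraph V) (u : V) : nHist G u = #(G.histFrom {u}) := by
  have hcons :
      {l | IsHistory G l ∧ l.head? = some u} = List.cons u '' {l | IsHistoryFrom G {u} l} := by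
    ext (_ | ⟨v, l⟩)
    · simp
    · simp +contextual [isHistory_cons_iff, and_comm, eq_comm]
  rw [nHist, ← Set.ncard_coe_finset, histFrom, Set.Finite.coe_toFinset,
    ← Set.ncard_image_of_injective _ List.cons_injective, ← hcons]
  exact Nat.card_coe_set_eq _

theorem IsTree.nHist_mul_prod_subtreeSize (hG : G.IsTree) (u : V) :
    nHist G u * ∏ v ∈ {u}ᶜ, subtreeSize G u v = (Fintype.card V - 1)! := by
  have hu : (G.induce ↑({u} : Finset V)).Connected := by
    rw [coe_singleton, induce_singleton_eq_top]
    exact connected_top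
  rw [nHist_eq_card_histFrom, hG.card_histFrom_mul_prod_subtreeSize (mem_singleton_self u) hu,
    card_compl, card_singleton]

end Fintype

end SimpleGraph

lemma List.prod_range_getD {α M : Type*} [CommMonoid M] (f : α → M) (l : List α) (d : α) :
    ∏ k ∈ Finset.range l.length, f (l.getD k d) = (l.map f).prod := by
  induction l with
  | nil => simp
  | cons a l ih =>
    rw [List.length_cons, Finset.prod_range_succ']
    simp only [List.getD_cons_succ, List.getD_cons_zero, ih, List.map_cons, List.prod_cons,
      mul_comm]

lemma Nat.prod_Ico_one_sub_eq_factorial (n : ℕ) : ∏ k ∈ Ico 1 n, (n - k) = (n - 1)! := by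
  rw [prod_Ico_eq_prod_range, ← Nat.descFactorial_self, Nat.descFactorial_eq_prod_range]
  exact prod_congr rfl fun k _ => by omega

lemma List.prod_Ico_getD_cons_eq_prod_compl {V M : Type*} [Fintype V] [CommMonoid M] (f : V → M)
    {u : V} {t : List V} (hnd : (u :: t).Nodup) (hmem : ∀ v, v ∈ u :: t) :
    ∏ k ∈ Finset.Ico 1 (Fintype.card V), f ((u :: t).getD k u) = ∏ v ∈ {u}ᶜ, f v := by
  have htu : t.toFinset = {u}ᶜ := by
    ext v
    have := hmem v
    have := (List.nodup_cons.1 hnd).1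
    grind [List.mem_toFinset, mem_compl, mem_singleton]
  have hcard : Fintype.card V = t.length + 1 := by
    rw [← List.toFinset_card_of_nodup (List.nodup_cons.1 hnd).2, htu, card_compl, card_singleton,
      Nat.sub_add_cancel (Fintype.card_pos_iff.2 ⟨u⟩)]
  rw [hcard, prod_Ico_eq_prod_range, Nat.add_sub_cancel]
  simp only [add_comm 1, List.getD_cons_succ]
  rw [List.prod_range_getD, ← List.prod_toFinset _ (List.nodup_cons.1 hnd).2, htu]

theorem stmt10 [Fintype V] (G : SimpleGraph V) (hG : G.IsTree) (u : V)
    (l : List V) (hl : IsHistory G l) (hhead : l.head? = some u) :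
    ∏ k ∈ Finset.Ico 1 (Fintype.card V),
        (subtreeSize G u (l.getD k u) : ℝ) / ((Fintype.card V - k : ℕ) : ℝ) =
      1 / (nHist G u : ℝ) := by
  obtain ⟨t, rfl⟩ : ∃ t, l = u :: t := ⟨l.tail, (List.cons_head?_tail hhead).symm⟩
  have hden : ∏ k ∈ Ico 1 (Fintype.card V), ((Fintype.card V - k : ℕ) : ℝ) =
      (Fintype.card V - 1)! := by
    exact_mod_cast Nat.prod_Ico_one_sub_eq_factorial _
  have hhook := hG.nHist_mul_prod_subtreeSize u
  have hprod : ∏ v ∈ {u}ᶜ, (subtreeSize G u v : ℝ) ≠ 0 := by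
    exact_mod_cast right_ne_zero_of_mul (hhook ▸ Nat.factorial_ne_zero _)
  rw [prod_div_distrib, List.prod_Ico_getD_cons_eq_prod_compl (fun v => (subtreeSize G u v : ℝ))
    hl.1 hl.2.1, hden, ← hhook, Nat.cast_mul, Nat.cast_prod, mul_comm, ← div_div, div_self hprod]
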